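/- arXiv:0707.1766 — 5 statements merged into one kernel-verified Lean document; each statement's English description precedes it below -/
import Mathlib

section
/- Let E = (I, F, V) be a C₁-space over F_q. Then the ℂ-vector space of invariant measures on E (i.e., of translation-invariant ℂ-linear functionals on D(E)) is one-dimensional: it contains a nonzero element, and any two of its elements are ℂ-linearly dependent. -/
open scoped Classical

/-- A `C₁`-space over the field `Fq`: an `Fq`-vector space `V` together with a filtration
`F` indexed by a nonempty partially ordered set `I` which is directed in both directions,
such that `⋂ᵢ F(i) = 0`, `⋃ᵢ F(i) = V`, and all quotients `F(j)/F(i)` (`i ≤ j`) are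
finite-dimensional over `Fq`. -/
structure C1Space (Fq : Type) [Field Fq] (I : Type) [PartialOrder I]
    (V : Type) [AddCommGroup V] [Module Fq V] where
  F : I → Submodule Fq V
  nonempty : Nonempty I
  directed : ∀ i j : I, ∃ k l : I, k ≤ i ∧ i ≤ l ∧ k ≤ j ∧ j ≤ l
  mono : Monotone F
  inter_eq_bot : ∀ v : V, (∀ i : I, v ∈ F i) → v = 0
  union_eq_top : ∀ v : V, ∃ i : I, v ∈ F i
  finite_quot : ∀ i j : I, i ≤ j →
    FiniteDimensional Fq (↥(F j) ⧸ Submodule.comap (F j).subtype (F i))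

variable {Fq : Type} [Field Fq] {I : Type} [PartialOrder I]
  {V : Type} [AddCommGroup V] [Module Fq V]

/-- Membership in the Bruhat space `D(E)`: locally constant functions with compact support,
i.e. `f` vanishes outside some `F(j)` and is invariant under translations by some `F(i)`,
`i ≤ j`. -/
def MemD (E : C1Space Fq I V) (f : V → ℂ) : Prop :=
  ∃ i j : I, i ≤ j ∧ (∀ v : V, v ∉ E.F j → f v = 0) ∧
    (∀ w ∈ E.F i, ∀ v : V, f (v + w) = f v)

/-- The Bruhat space `D(E)` as a `ℂ`-subspace of the space of all functions `V → ℂ`. -/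
noncomputable def Dspace (E : C1Space Fq I V) : Submodule ℂ (V → ℂ) where
  carrier := {f | MemD E f}
  zero_mem' := by
    obtain ⟨i⟩ := E.nonempty
    exact ⟨i, i, le_rfl, fun v _ => rfl, fun w _ v => rfl⟩
  add_mem' := by
    rintro f g ⟨i₁, j₁, h₁, hz₁, hi₁⟩ ⟨i₂, j₂, h₂, hz₂, hi₂⟩
    obtain ⟨k, l₀, hk₁, -, hk₂, -⟩ := E.directed i₁ i₂
    obtain ⟨k₀, l, -, hl₁, -, hl₂⟩ := E.directed j₁ j₂
    refine ⟨k, l, le_trans hk₁ (le_trans h₁ hl₁), ?_, ?_⟩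
    · intro v hv
      have hv₁ : v ∉ E.F j₁ := fun h => hv (E.mono hl₁ h)
      have hv₂ : v ∉ E.F j₂ := fun h => hv (E.mono hl₂ h)
      show f v + g v = 0
      rw [hz₁ v hv₁, hz₂ v hv₂, add_zero]
    · intro w hw v
      show f (v + w) + g (v + w) = f v + g v
      rw [hi₁ w (E.mono hk₁ hw) v, hi₂ w (E.mono hk₂ hw) v]
  smul_mem' := by
    rintro c f ⟨i, j, hij, hz, hi⟩
    refine ⟨i, j, hij, ?_, ?_⟩
    · intro v hv
      show c * f v = 0
      rw [hz v hv, mul_zero]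
    · intro w hw v
      show c * f (v + w) = c * f v
      rw [hi w hw v]

theorem mem_Dspace {E : C1Space Fq I V} {f : V → ℂ} (h : MemD E f) : f ∈ Dspace E := h

/-- `D(E)` is stable under translations `T_a`. -/
theorem translate_mem (E : C1Space Fq I V) {f : V → ℂ} (hf : f ∈ Dspace E) (a : V) :
    (fun v => f (v + a)) ∈ Dspace E := by
  obtain ⟨i, j, hij, hz, hinv⟩ := hf
  obtain ⟨j', hj'⟩ := E.union_eq_top a
  obtain ⟨k₀, l, -, hl₁, -, hl₂⟩ := E.directed j j'
  refine ⟨i, l, le_trans hij hl₁, ?_, ?_⟩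
  · intro v hv
    show f (v + a) = 0
    apply hz
    intro hva
    apply hv
    have hsub : v + a - a ∈ E.F l := (E.F l).sub_mem (E.mono hl₁ hva) (E.mono hl₂ hj')
    simpa using hsub
  · intro w hw v
    show f (v + w + a) = f (v + a)
    rw [add_right_comm]
    exact hinv w hw (v + a)

/-- An invariant measure on `E` is a translation-invariant `ℂ`-linear functional on `D(E)`. -/
def IsInvariantMeasure (E : C1Space Fq I V) (μ : ↥(Dspace E) →ₗ[ℂ] ℂ) : Prop :=
  ∀ (a : V) (f : ↥(Dspace E)),
    μ ⟨fun v => (f : V → ℂ) (v + a), translate_mem E f.2 a⟩ = μ f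

/-- The indicator function of a filtration subspace `F(i)` lies in `D(E)`. -/
theorem indicator_mem (E : C1Space Fq I V) (i : I) :
    (fun v => if v ∈ E.F i then (1 : ℂ) else 0) ∈ Dspace E := by
  refine ⟨i, i, le_rfl, ?_, ?_⟩
  · intro v hv
    simp [hv]
  · intro w hw v
    show (if v + w ∈ E.F i then (1 : ℂ) else 0) = (if v ∈ E.F i then (1 : ℂ) else 0)
    by_cases h : v ∈ E.F i
    · simp [h, (E.F i).add_mem h hw]
    · have h2 : v + w ∉ E.F i := fun hvw => h (by simpa using (E.F i).sub_mem hvw hw)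
      simp [h, h2]

/-!
An invariant measure `μ` is determined by its value on the indicator `1_{F(i₀)}` of a single
`F(i₀)`. Indeed, an `F(k)`-periodic `f ∈ D(E)` is the finite combination
`∑ₓ f(x) • T_{-x} 1_{F(k)}` over the cosets `x` of `F(k)` meeting its support, so
`μ f = (∑_{x ∈ V/F(k)} f(x)) * μ(1_{F(k)})`, and for `k ≤ i₀` this gives
`μ(1_{F(i₀)}) = [F(i₀) : F(k)] * μ(1_{F(k)})`; hence `μ = μ(1_{F(i₀)}) • haar`.
Conversely, `haar f = [F(i₀) : F(k)]⁻¹ * ∑_{x ∈ V/F(k)} f(x)` for any `k ≤ i₀` such that `f` is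
`F(k)`-periodic does not depend on `k`: refining `F(k)` to `F(m)` multiplies both the coset sum
and the index by `[F(k) : F(m)]`. It is a nonzero invariant measure.
-/

open Function

section CosetSum

variable {G : Type*} [AddCommGroup G] {W W' U : AddSubgroup G} {f g : G → ℂ}

/-- Only meaningful for `W`-periodic `f`, where it does not depend on the chosen
representatives. -/
noncomputable def cosetSum (W : AddSubgroup G) (f : G → ℂ) : ℂ :=
  ∑ᶠ x : G ⧸ W, f (Quotient.out x)

lemma apply_out_mk (hf : ∀ w ∈ W, Periodic f w) (v : G) :
    f (Quotient.out (v : G ⧸ W)) = f v := by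
  obtain ⟨w, hw⟩ := QuotientAddGroup.mk_out_eq_add W v
  rw [hw]
  exact hf w w.2 v

lemma cosetSum_comp_add_right (hf : ∀ w ∈ W, Periodic f w) (a : G) :
    cosetSum W (fun v => f (v + a)) = cosetSum W f := by
  have h : ∀ x : G ⧸ W, f (Quotient.out x + a) = f (Quotient.out (x + (a : G ⧸ W))) := by
    intro x
    conv_rhs => rw [← QuotientAddGroup.out_eq' x, ← QuotientAddGroup.mk_add, apply_out_mk hf]
  simp only [cosetSum, h]
  exact finsum_comp_equiv (Equiv.addRight (a : G ⧸ W)) (f := fun x => f (Quotient.out x))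

lemma cosetSum_add (hf : HasFiniteSupport fun x : G ⧸ W => f (Quotient.out x))
    (hg : HasFiniteSupport fun x : G ⧸ W => g (Quotient.out x)) :
    cosetSum W (f + g) = cosetSum W f + cosetSum W g :=
  finsum_add_distrib hf hg

lemma cosetSum_smul (c : ℂ) (f : G → ℂ) : cosetSum W (c • f) = c * cosetSum W f :=
  (mul_finsum _ c).symm

lemma cosetSum_indicator_self : cosetSum W ((W : Set G).indicator 1) = 1 := by
  rw [cosetSum, finsum_eq_single _ 0]
  · simp [← QuotientAddGroup.eq_zero_iff]
  · intro x hx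
    rw [Set.indicator_of_notMem]
    rwa [SetLike.mem_coe, ← QuotientAddGroup.eq_zero_iff, QuotientAddGroup.out_eq']

lemma quotientEquivProdOfLE_apply_fst (h : W' ≤ W) (x : G ⧸ W') :
    (AddSubgroup.quotientEquivProdOfLE h x).1 = ((Quotient.out x : G) : G ⧸ W) := by
  conv_lhs => rw [← QuotientAddGroup.out_eq' x]
  rfl

lemma finite_setOf_out_mem (h : W' ≤ W) [W'.IsFiniteRelIndex W] :
    {x : G ⧸ W' | Quotient.out x ∈ W}.Finite := by
  have hfin : ({0} ×ˢ Set.univ : Set ((G ⧸ W) × (W ⧸ W'.addSubgroupOf W))).Finite :=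
    (Set.finite_singleton 0).prod Set.finite_univ
  refine (hfin.preimage (AddSubgroup.quotientEquivProdOfLE h).injective.injOn).subset ?_
  intro x hx
  simp only [Set.mem_preimage, Set.mem_prod, Set.mem_singleton_iff, Set.mem_univ, and_true,
    quotientEquivProdOfLE_apply_fst, QuotientAddGroup.eq_zero_iff]
  exact hx

lemma cosetSum_eq_relIndex_mul (h : W' ≤ W) [W'.IsFiniteRelIndex W]
    (hf : ∀ w ∈ W, Periodic f w) (hfin : HasFiniteSupport fun x : G ⧸ W => f (Quotient.out x)) :
    cosetSum W' f = W'.relIndex W * cosetSum W f := by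
  set e := AddSubgroup.quotientEquivProdOfLE h
  have hfib : ∀ p, f (Quotient.out (e.symm p)) = f (Quotient.out p.1) := by
    intro p
    rw [← apply_out_mk hf, ← quotientEquivProdOfLE_apply_fst h, e.apply_symm_apply]
  have hfin' : HasFiniteSupport fun p : (G ⧸ W) × (W ⧸ W'.addSubgroupOf W) =>
      f (Quotient.out p.1) :=
    (hfin.prod Set.finite_univ).subset fun _ hp => ⟨hp, trivial⟩
  rw [cosetSum, ← finsum_comp_equiv e.symm]
  simp only [hfib]
  rw [finsum_curry _ hfin']
  have : Fintype (W ⧸ W'.addSubgroupOf W) := Fintype.ofFinite _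
  simp only [finsum_eq_sum_of_fintype (α := W ⧸ W'.addSubgroupOf W), Finset.sum_const,
    Finset.card_univ, ← Nat.card_eq_fintype_card, ← AddSubgroup.index_eq_card, nsmul_eq_mul]
  exact (mul_finsum _ _).symm

lemma sum_smul_translate_indicator (hf : ∀ w ∈ W, Periodic f w) (s : Finset (G ⧸ W))
    (hs : ∀ v, f v ≠ 0 → (v : G ⧸ W) ∈ s) :
    ∑ x ∈ s, f (Quotient.out x) • (fun v => (W : Set G).indicator 1 (v + -Quotient.out x)) =
      f := by
  classical
  funext v
  have h : ∀ x : G ⧸ W,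
      f (Quotient.out x) * (W : Set G).indicator 1 (v + -Quotient.out x) =
        if (v : G ⧸ W) = x then f v else 0 := by
    intro x
    have hmem : v + -Quotient.out x ∈ W ↔ (v : G ⧸ W) = x := by
      rw [← QuotientAddGroup.eq_zero_iff, QuotientAddGroup.mk_add, QuotientAddGroup.mk_neg,
        QuotientAddGroup.out_eq', add_neg_eq_zero]
    by_cases hx : (v : G ⧸ W) = x
    · subst hx
      simp [apply_out_mk hf, hmem.mpr rfl]
    · simp [hx, mt hmem.mp hx]
  simp only [Finset.sum_apply, Pi.smul_apply, smul_eq_mul, h, Finset.sum_ite_eq]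
  by_cases hv : f v = 0
  · simp [hv]
  · simp [hs v hv]

lemma periodic_indicator_of_le (h : W ≤ U) :
    ∀ w ∈ W, Periodic ((U : Set G).indicator (1 : G → ℂ)) w := by
  intro w hw v
  simp [Set.indicator_apply, U.add_mem_cancel_right (h hw)]

end CosetSum

lemma exists_nontrivial_relation_smul_smul {K M : Type*} [Field K] [AddCommGroup M]
    [Module K M] (a b : K) (x : M) :
    ∃ c₁ c₂ : K, ¬(c₁ = 0 ∧ c₂ = 0) ∧ c₁ • a • x + c₂ • b • x = 0 := by
  by_cases ha : a = 0
  · exact ⟨1, 0, by simp, by simp [ha]⟩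
  · refine ⟨b, -a, by simp [ha], ?_⟩
    rw [smul_smul, smul_smul, ← add_smul, mul_comm, neg_mul, add_neg_cancel, zero_smul]

namespace C1Space

variable {E : C1Space Fq I V}

abbrev addSubgroup (E : C1Space Fq I V) (i : I) : AddSubgroup V := (E.F i).toAddSubgroup

lemma addSubgroup_mono (E : C1Space Fq I V) {i j : I} (h : i ≤ j) :
    E.addSubgroup i ≤ E.addSubgroup j :=
  Submodule.toAddSubgroup_mono (E.mono h)

lemma exists_le_le (E : C1Space Fq I V) (i j : I) : ∃ k, k ≤ i ∧ k ≤ j := by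
  obtain ⟨k, -, hki, -, hkj, -⟩ := E.directed i j
  exact ⟨k, hki, hkj⟩

lemma exists_ge_ge (E : C1Space Fq I V) (i j : I) : ∃ l, i ≤ l ∧ j ≤ l := by
  obtain ⟨-, l, -, hil, -, hjl⟩ := E.directed i j
  exact ⟨l, hil, hjl⟩

lemma isFiniteRelIndex [Finite Fq] (E : C1Space Fq I V) {i j : I} (h : i ≤ j) :
    (E.addSubgroup i).IsFiniteRelIndex (E.addSubgroup j) := by
  have := E.finite_quot i j h
  have : Finite (E.F j ⧸ (E.F i).comap (E.F j).subtype) := Module.finite_of_finite Fq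
  exact ⟨@AddSubgroup.index_ne_zero_of_finite _ _ _ this⟩

lemma exists_le_periodic {f : V → ℂ} (hf : f ∈ Dspace E) (i : I) :
    ∃ k ≤ i, ∀ w ∈ E.addSubgroup k, Periodic f w := by
  obtain ⟨i', -, -, -, hper⟩ := hf
  obtain ⟨k, hki, hki'⟩ := E.exists_le_le i i'
  exact ⟨k, hki, fun w hw => hper w (E.mono hki' hw)⟩

variable [Finite Fq]

lemma hasFiniteSupport_comp_out {f : V → ℂ} (hf : f ∈ Dspace E) (k : I) :
    HasFiniteSupport fun x : V ⧸ E.addSubgroup k => f (Quotient.out x) := by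
  obtain ⟨-, j, -, hsupp, -⟩ := hf
  obtain ⟨l, hkl, hjl⟩ := E.exists_ge_ge k j
  have := E.isFiniteRelIndex hkl
  refine (finite_setOf_out_mem (E.addSubgroup_mono hkl)).subset fun x hx => ?_
  by_contra hout
  exact hx (hsupp _ fun h => hout (E.mono hjl h))

lemma cosetSum_div_relIndex_of_le {f : V → ℂ} (hf : f ∈ Dspace E) {i₀ k m : I} (hmk : m ≤ k)
    (hk : k ≤ i₀) (hper : ∀ w ∈ E.addSubgroup k, Periodic f w) :
    cosetSum (E.addSubgroup m) f / (E.addSubgroup m).relIndex (E.addSubgroup i₀) =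
      cosetSum (E.addSubgroup k) f / (E.addSubgroup k).relIndex (E.addSubgroup i₀) := by
  have := E.isFiniteRelIndex hmk
  have := E.isFiniteRelIndex hk
  rw [cosetSum_eq_relIndex_mul (E.addSubgroup_mono hmk) hper (hasFiniteSupport_comp_out hf k),
    ← AddSubgroup.relIndex_mul_relIndex _ _ _ (E.addSubgroup_mono hmk) (E.addSubgroup_mono hk),
    Nat.cast_mul, mul_div_mul_left _ _ (Nat.cast_ne_zero.mpr AddSubgroup.relIndex_ne_zero)]

/-- The invariant measure giving `F(i₀)` volume `1`; by `haarFun_eq` the choice of `k` is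
immaterial. -/
noncomputable def haarFun (E : C1Space Fq I V) (i₀ : I) (f : Dspace E) : ℂ :=
  cosetSum (E.addSubgroup (exists_le_periodic f.2 i₀).choose) f /
    (E.addSubgroup (exists_le_periodic f.2 i₀).choose).relIndex (E.addSubgroup i₀)

lemma haarFun_eq {i₀ k : I} (f : Dspace E) (hk : k ≤ i₀)
    (hper : ∀ w ∈ E.addSubgroup k, Periodic (f : V → ℂ) w) :
    haarFun E i₀ f =
      cosetSum (E.addSubgroup k) f / (E.addSubgroup k).relIndex (E.addSubgroup i₀) := by
  obtain ⟨hk', hper'⟩ := (exists_le_periodic f.2 i₀).choose_spec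
  obtain ⟨m, hmk, hmk'⟩ := E.exists_le_le k (exists_le_periodic f.2 i₀).choose
  rw [haarFun, ← cosetSum_div_relIndex_of_le f.2 hmk' hk' hper',
    cosetSum_div_relIndex_of_le f.2 hmk hk hper]

noncomputable def haar (E : C1Space Fq I V) (i₀ : I) : Dspace E →ₗ[ℂ] ℂ where
  toFun := haarFun E i₀
  map_add' f g := by
    obtain ⟨kf, hkf, hf⟩ := exists_le_periodic f.2 i₀
    obtain ⟨kg, hkg, hg⟩ := exists_le_periodic g.2 i₀
    obtain ⟨m, hmf, hmg⟩ := E.exists_le_le kf kg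
    have hm : m ≤ i₀ := hmf.trans hkf
    have hf' : ∀ w ∈ E.addSubgroup m, Periodic (f : V → ℂ) w :=
      fun w hw => hf w (E.mono hmf hw)
    have hg' : ∀ w ∈ E.addSubgroup m, Periodic (g : V → ℂ) w :=
      fun w hw => hg w (E.mono hmg hw)
    have hfg : ∀ w ∈ E.addSubgroup m, Periodic ((f + g : Dspace E) : V → ℂ) w :=
      fun w hw => (hf' w hw).add (hg' w hw)
    rw [haarFun_eq (f + g) hm hfg, haarFun_eq f hm hf', haarFun_eq g hm hg', Submodule.coe_add,
      cosetSum_add (hasFiniteSupport_comp_out f.2 m) (hasFiniteSupport_comp_out g.2 m), add_div]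
  map_smul' c f := by
    obtain ⟨k, hk, hf⟩ := exists_le_periodic f.2 i₀
    rw [haarFun_eq (c • f) hk fun w hw => (hf w hw).smul c, haarFun_eq f hk hf,
      Submodule.coe_smul, cosetSum_smul, RingHom.id_apply, smul_eq_mul, mul_div_assoc]

lemma haar_apply {i₀ k : I} (f : Dspace E) (hk : k ≤ i₀)
    (hper : ∀ w ∈ E.addSubgroup k, Periodic (f : V → ℂ) w) :
    E.haar i₀ f = cosetSum (E.addSubgroup k) f / (E.addSubgroup k).relIndex (E.addSubgroup i₀) :=
  haarFun_eq f hk hper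

lemma isInvariantMeasure_haar (E : C1Space Fq I V) (i₀ : I) :
    IsInvariantMeasure E (E.haar i₀) := by
  intro a f
  obtain ⟨k, hk, hf⟩ := exists_le_periodic f.2 i₀
  rw [haar_apply _ hk fun w hw => (hf w hw).add_const a, haar_apply f hk hf,
    cosetSum_comp_add_right hf a]

noncomputable def indicatorD (E : C1Space Fq I V) (i : I) : Dspace E :=
  ⟨(E.addSubgroup i : Set V).indicator 1, indicator_mem E i⟩

lemma haar_indicatorD (E : C1Space Fq I V) (i₀ : I) : E.haar i₀ (E.indicatorD i₀) = 1 := by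
  rw [haar_apply _ le_rfl (periodic_indicator_of_le le_rfl), indicatorD, cosetSum_indicator_self,
    AddSubgroup.relIndex_self, Nat.cast_one, div_one]

lemma _root_.IsInvariantMeasure.apply_eq_cosetSum_mul {μ : Dspace E →ₗ[ℂ] ℂ}
    (hμ : IsInvariantMeasure E μ) (f : Dspace E) {k : I}
    (hper : ∀ w ∈ E.addSubgroup k, Periodic (f : V → ℂ) w) :
    μ f = cosetSum (E.addSubgroup k) f * μ (E.indicatorD k) := by
  have hfin := hasFiniteSupport_comp_out f.2 k
  let s := hfin.toFinset
  have hdecomp : f = ∑ x ∈ s, (f : V → ℂ) (Quotient.out x) •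
      (⟨_, translate_mem E (E.indicatorD k).2 (-Quotient.out x)⟩ : Dspace E) := by
    refine Subtype.ext ?_
    rw [Submodule.coe_sum]
    refine (sum_smul_translate_indicator hper s fun v hv => ?_).symm
    exact (Set.Finite.mem_toFinset _).mpr (by rwa [mem_support, apply_out_mk hper])
  calc μ f = ∑ x ∈ s, (f : V → ℂ) (Quotient.out x) * μ (E.indicatorD k) := by
        conv_lhs => rw [hdecomp]
        simp only [map_sum, map_smul, smul_eq_mul]
        exact Finset.sum_congr rfl fun x _ => congrArg _ (hμ _ _)
    _ = cosetSum (E.addSubgroup k) f * μ (E.indicatorD k) := by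
        rw [← Finset.sum_mul, cosetSum,
          finsum_eq_sum_of_support_subset _ (Set.Finite.coe_toFinset hfin).symm.subset]

lemma _root_.IsInvariantMeasure.eq_smul_haar {μ : Dspace E →ₗ[ℂ] ℂ}
    (hμ : IsInvariantMeasure E μ) (i₀ : I) : μ = μ (E.indicatorD i₀) • E.haar i₀ := by
  ext f
  obtain ⟨k, hk, hf⟩ := exists_le_periodic f.2 i₀
  have := E.isFiniteRelIndex hk
  have hind : μ (E.indicatorD i₀) =
      (E.addSubgroup k).relIndex (E.addSubgroup i₀) * μ (E.indicatorD k) := by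
    rw [IsInvariantMeasure.apply_eq_cosetSum_mul hμ _
        (periodic_indicator_of_le (E.addSubgroup_mono hk)), indicatorD,
      cosetSum_eq_relIndex_mul (E.addSubgroup_mono hk) (periodic_indicator_of_le le_rfl)
        (hasFiniteSupport_comp_out (E.indicatorD i₀).2 i₀), cosetSum_indicator_self, mul_one]
  rw [LinearMap.smul_apply, haar_apply f hk hf, IsInvariantMeasure.apply_eq_cosetSum_mul hμ f hf,
    hind, smul_eq_mul]
  field_simp [Nat.cast_ne_zero.mpr (AddSubgroup.relIndex_ne_zero (H := E.addSubgroup k))]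

end C1Space

/-- for a `C₁`-space `E` over a finite field, the `ℂ`-vector space of
invariant measures on `E` (translation-invariant `ℂ`-linear functionals on `D(E)`) is
one-dimensional: it contains a nonzero element, and any two of its elements are
`ℂ`-linearly dependent. -/
theorem statement11 (Fq : Type) [Field Fq] [Fintype Fq] (I : Type) [PartialOrder I]
    (V : Type) [AddCommGroup V] [Module Fq V] (E : C1Space Fq I V) :
    (∃ μ : ↥(Dspace E) →ₗ[ℂ] ℂ, IsInvariantMeasure E μ ∧ μ ≠ 0) ∧
    (∀ μ₁ μ₂ : ↥(Dspace E) →ₗ[ℂ] ℂ, IsInvariantMeasure E μ₁ → IsInvariantMeasure E μ₂ →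
      ∃ c₁ c₂ : ℂ, ¬(c₁ = 0 ∧ c₂ = 0) ∧ c₁ • μ₁ + c₂ • μ₂ = 0) := by
  obtain ⟨i₀⟩ := E.nonempty
  refine ⟨⟨E.haar i₀, E.isInvariantMeasure_haar i₀, fun h => ?_⟩, fun μ₁ μ₂ h₁ h₂ => ?_⟩
  · simpa [h] using E.haar_indicatorD i₀
  · rw [IsInvariantMeasure.eq_smul_haar h₁ i₀, IsInvariantMeasure.eq_smul_haar h₂ i₀]
    exact exists_nontrivial_relation_smul_smul _ _ _
end

section
/- Let E = (I, F, V) be a C₁-space over F_q and μ a nonzero invariant measure on E. Then μ(δ_{F(i)}) ≠ 0 for every i ∈ I, where δ_{F(i)} ∈ D(E) is the indicator function of the subspace F(i). -/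
open scoped Classical

variable {Fq : Type} [Field Fq] {I : Type} [PartialOrder I]
  {V : Type} [AddCommGroup V] [Module Fq V]

/-! Translation invariance reduces everything to the indicators `δ_{F(i)}`: a function
supported in `F(j)` and invariant under `F(i)` is a finite combination of translates of
`δ_{F(i)}` to the cosets of `F(i)` in `F(j)`, so `μ f` is a multiple of `μ δ_{F(i)}`; in
particular `μ δ_{F(j)} = #(F(j)/F(i)) • μ δ_{F(i)}` for `i ≤ j`. The index being a nonzero
integer, the vanishing of `μ δ_{F(i)}` passes through a common lower bound to every index,
and then `μ` vanishes on all of `D(E)`. -/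

namespace C1Space

variable (E : C1Space Fq I V)

abbrev layer (i j : I) : Type := ↥(E.F j) ⧸ (E.F i).comap (E.F j).subtype

theorem finite_layer [Finite Fq] {i j : I} (hij : i ≤ j) : Finite (E.layer i j) :=
  haveI := E.finite_quot i j hij
  Module.finite_of_finite Fq

noncomputable def indicator (i : I) : ↥(Dspace E) :=
  ⟨fun v => if v ∈ E.F i then 1 else 0, indicator_mem E i⟩

def translate (f : ↥(Dspace E)) (a : V) : ↥(Dspace E) :=
  ⟨fun v => (f : V → ℂ) (v + a), translate_mem E f.2 a⟩

theorem indicator_apply_of_not_mem {i : I} {v : V} (hv : v ∉ E.F i) :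
    (E.indicator i : V → ℂ) v = 0 :=
  if_neg hv

theorem indicator_add_of_mem {i : I} {w : V} (hw : w ∈ E.F i) (v : V) :
    (E.indicator i : V → ℂ) (v + w) = (E.indicator i : V → ℂ) v := by
  simp only [indicator, (E.F i).add_mem_iff_left hw]

theorem sub_out_mem_iff {i j : I} {v : V} (hv : v ∈ E.F j) (c : E.layer i j) :
    v - ((Quotient.out c : E.F j) : V) ∈ E.F i ↔ Submodule.Quotient.mk ⟨v, hv⟩ = c := by
  conv_rhs => rw [← Submodule.Quotient.mk_out c, Submodule.Quotient.eq]
  rfl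

variable {E}

theorem eq_sum_smul_translate_indicator {i j : I} (hij : i ≤ j) [Fintype (E.layer i j)]
    (f : ↥(Dspace E)) (hsupp : ∀ v, v ∉ E.F j → (f : V → ℂ) v = 0)
    (hinv : ∀ w ∈ E.F i, ∀ v, (f : V → ℂ) (v + w) = (f : V → ℂ) v) :
    f = ∑ c : E.layer i j, (f : V → ℂ) (Quotient.out c : E.F j) •
      E.translate (E.indicator i) (-(Quotient.out c : E.F j)) := by
  refine Subtype.ext (funext fun v => ?_)
  simp only [Submodule.coe_sum, Submodule.coe_smul, Finset.sum_apply, Pi.smul_apply,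
    smul_eq_mul, translate, indicator, ← sub_eq_add_neg]
  by_cases hv : v ∈ E.F j
  · have hterm : ∀ c : E.layer i j,
        (f : V → ℂ) (Quotient.out c : E.F j) *
            (if v - (Quotient.out c : E.F j) ∈ E.F i then 1 else 0) =
          if Submodule.Quotient.mk ⟨v, hv⟩ = c then (f : V → ℂ) v else 0 := by
      intro c
      rw [← E.sub_out_mem_iff hv c]
      split_ifs with hmem
      · rw [mul_one, ← hinv _ hmem, add_sub_cancel]
      · rw [mul_zero]
    simp only [hterm, Finset.sum_ite_eq, Finset.mem_univ, if_true]
  · rw [hsupp v hv]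
    refine (Finset.sum_eq_zero fun c _ => ?_).symm
    have hnot : v - (Quotient.out c : E.F j) ∉ E.F i := fun hmem =>
      hv (by simpa using (E.F j).add_mem (E.mono hij hmem) (Quotient.out c).2)
    rw [if_neg hnot, mul_zero]

end C1Space

namespace IsInvariantMeasure

open C1Space

variable {E : C1Space Fq I V} {μ : ↥(Dspace E) →ₗ[ℂ] ℂ} (hμ : IsInvariantMeasure E μ)
include hμ

theorem map_translate (f : ↥(Dspace E)) (a : V) : μ (E.translate f a) = μ f :=
  hμ a f

theorem map_eq_sum_mul_indicator {i j : I} (hij : i ≤ j) [Fintype (E.layer i j)]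
    (f : ↥(Dspace E)) (hsupp : ∀ v, v ∉ E.F j → (f : V → ℂ) v = 0)
    (hinv : ∀ w ∈ E.F i, ∀ v, (f : V → ℂ) (v + w) = (f : V → ℂ) v) :
    μ f = (∑ c : E.layer i j, (f : V → ℂ) (Quotient.out c : E.F j)) * μ (E.indicator i) := by
  conv_lhs => rw [eq_sum_smul_translate_indicator hij f hsupp hinv]
  simp only [map_sum, map_smul, hμ.map_translate, smul_eq_mul, Finset.sum_mul]

variable [Finite Fq]

theorem map_indicator_of_le {i j : I} (hij : i ≤ j) :
    μ (E.indicator j) = Nat.card (E.layer i j) * μ (E.indicator i) := by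
  have := E.finite_layer hij
  obtain ⟨_⟩ := nonempty_fintype (E.layer i j)
  rw [hμ.map_eq_sum_mul_indicator hij (E.indicator j) (fun _ => E.indicator_apply_of_not_mem)
    (fun w hw => E.indicator_add_of_mem (E.mono hij hw))]
  simp [indicator, Nat.card_eq_fintype_card]

theorem map_indicator_eq_zero_iff_of_le {i j : I} (hij : i ≤ j) :
    μ (E.indicator j) = 0 ↔ μ (E.indicator i) = 0 := by
  have := E.finite_layer hij
  have hcard : (Nat.card (E.layer i j) : ℂ) ≠ 0 := by
    exact_mod_cast Nat.card_pos.ne'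
  rw [hμ.map_indicator_of_le hij, mul_eq_zero, or_iff_right hcard]

theorem eq_zero_of_map_indicator_eq_zero (h : ∀ i, μ (E.indicator i) = 0) : μ = 0 := by
  ext f
  obtain ⟨i, j, hij, hsupp, hinv⟩ := f.2
  have := E.finite_layer hij
  obtain ⟨_⟩ := nonempty_fintype (E.layer i j)
  rw [LinearMap.zero_apply, hμ.map_eq_sum_mul_indicator hij f hsupp hinv, h i, mul_zero]

end IsInvariantMeasure

/-- if `μ` is a nonzero invariant measure on a `C₁`-space `E` over a finite
field, then `μ(δ_{F(i)}) ≠ 0` for every `i ∈ I`. -/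
theorem statement12 (Fq : Type) [Field Fq] [Fintype Fq] (I : Type) [PartialOrder I]
    (V : Type) [AddCommGroup V] [Module Fq V] (E : C1Space Fq I V)
    (μ : ↥(Dspace E) →ₗ[ℂ] ℂ) (hμ : IsInvariantMeasure E μ) (hμ0 : μ ≠ 0) (i : I) :
    μ ⟨fun v => if v ∈ E.F i then (1 : ℂ) else 0, indicator_mem E i⟩ ≠ 0 := by
  intro h
  refine hμ0 (hμ.eq_zero_of_map_indicator_eq_zero fun i' => ?_)
  obtain ⟨k, -, hki, -, hki', -⟩ := E.directed i i'
  exact (hμ.map_indicator_eq_zero_iff_of_le hki').2 ((hμ.map_indicator_eq_zero_iff_of_le hki).1 h)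
end

section
/- The Fourier transform maps D(E) into the Bruhat space of the dual filtered space: let E = (I, F, V) be a C₁-space over F_q, μ an invariant measure on E, and f ∈ D(E) with witnesses i ≤ j in I (f vanishes outside F(j) and T_w f = f for all w ∈ F(i)). Then F_μ(f) vanishes at every w ∈ V̌ with w ∉ F(i)^⊥, and F_μ(f)(w + b) = F_μ(f)(w) for all w ∈ V̌ and b ∈ F(j)^⊥. -/
/-!
Translating by `a ∈ F(i)` fixes `f` but multiplies the twisted function `f · conj (ψ ∘ w)` by the
constant `conj (ψ (w a))`; since `μ` is translation invariant, `F_μ(f)(w) = 0` as soon as some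
`a ∈ F(i)` has `ψ (w a) ≠ 1`, and rescaling an `a ∈ F(i)` with `w a ≠ 0` produces one. Adding
`b ∈ F(j)^⊥` to `w` does not change the twisted function at all, because `f` is supported
in `F(j)`.
-/

open scoped Classical

variable {Fq : Type} [Field Fq] {I : Type} [PartialOrder I]
  {V : Type} [AddCommGroup V] [Module Fq V]

/-- Membership of a linear functional `w : V* = Hom_{Fq}(V, Fq)` in
`V̌ = ⋃ᵢ F(i)^⊥`: `w` annihilates some filtration subspace. -/
def MemDualCheck (E : C1Space Fq I V) (w : Module.Dual Fq V) : Prop :=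
  ∃ i : I, ∀ u ∈ E.F i, w u = 0

theorem memDualCheck_sub (E : C1Space Fq I V) {w b : Module.Dual Fq V}
    (hw : MemDualCheck E w) (hb : MemDualCheck E b) : MemDualCheck E (w - b) := by
  obtain ⟨i, hi⟩ := hw
  obtain ⟨i', hi'⟩ := hb
  obtain ⟨k, l₀, hk₁, -, hk₂, -⟩ := E.directed i i'
  exact ⟨k, fun u hu => by
    simp [LinearMap.sub_apply, hi u (E.mono hk₁ hu), hi' u (E.mono hk₂ hu)]⟩

theorem memDualCheck_add (E : C1Space Fq I V) {w b : Module.Dual Fq V}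
    (hw : MemDualCheck E w) (hb : MemDualCheck E b) : MemDualCheck E (w + b) := by
  obtain ⟨i, hi⟩ := hw
  obtain ⟨i', hi'⟩ := hb
  obtain ⟨k, l₀, hk₁, -, hk₂, -⟩ := E.directed i i'
  exact ⟨k, fun u hu => by
    simp [LinearMap.add_apply, hi u (E.mono hk₁ hu), hi' u (E.mono hk₂ hu)]⟩

/-- Multiplying an element of `D(E)` by a "character" function `v ↦ c (w v)`,
for `w ∈ V̌`, stays in `D(E)`. -/
theorem mul_char_mem (E : C1Space Fq I V) {f : V → ℂ} (hf : f ∈ Dspace E)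
    {w : Module.Dual Fq V} (hw : MemDualCheck E w) (c : Fq → ℂ)
    (hc : ∀ x y : Fq, c (x + y) = c x * c y) (hc0 : c 0 = 1) :
    (fun v => f v * c (w v)) ∈ Dspace E := by
  obtain ⟨i, j, hij, hz, hinv⟩ := hf
  obtain ⟨i', hi'⟩ := hw
  obtain ⟨k, l₀, hk₁, -, hk₂, -⟩ := E.directed i i'
  refine ⟨k, j, le_trans hk₁ hij, ?_, ?_⟩
  · intro v hv
    show f v * c (w v) = 0
    rw [hz v hv, zero_mul]
  · intro u hu v
    show f (v + u) * c (w (v + u)) = f v * c (w v)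
    rw [hinv u (E.mono hk₁ hu) v, map_add, hc, hi' u (E.mono hk₂ hu), hc0, mul_one]

theorem conj_char_mem (E : C1Space Fq I V) (ψ : AddChar Fq ℂ) {f : V → ℂ}
    (hf : f ∈ Dspace E) {w : Module.Dual Fq V} (hw : MemDualCheck E w) :
    (fun v => f v * (starRingEnd ℂ) (ψ (w v))) ∈ Dspace E :=
  mul_char_mem E hf hw (fun x => (starRingEnd ℂ) (ψ x))
    (fun x y => by simp only [AddChar.map_add_eq_mul, map_mul])
    (by simp only [AddChar.map_zero_eq_one, map_one])

theorem char_mul_mem (E : C1Space Fq I V) (ψ : AddChar Fq ℂ) {f : V → ℂ}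
    (hf : f ∈ Dspace E) {b : Module.Dual Fq V} (hb : MemDualCheck E b) :
    (fun v => ψ (b v) * f v) ∈ Dspace E := by
  have h := mul_char_mem E hf hb (fun x => ψ x) (fun x y => ψ.map_add_eq_mul x y)
    ψ.map_zero_eq_one
  have hfun : (fun v => ψ (b v) * f v) = fun v => f v * ψ (b v) := by
    funext v; ring
  rw [hfun]
  exact h

/-- The Fourier transform of `f ∈ D(E)` relative to an invariant measure `μ`, as a function
on `V̌ = ⋃ᵢ F(i)^⊥`: `F_μ(f)(w) = μ (v ↦ f v * conj (ψ (w v)))`. -/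
noncomputable def fourierD (E : C1Space Fq I V) (ψ : AddChar Fq ℂ)
    (μ : ↥(Dspace E) →ₗ[ℂ] ℂ) (f : ↥(Dspace E))
    (w : {w : Module.Dual Fq V // MemDualCheck E w}) : ℂ :=
  μ ⟨fun v => (f : V → ℂ) v * (starRingEnd ℂ) (ψ (w.1 v)), conj_char_mem E ψ f.2 w.2⟩

theorem exists_mem_addChar_apply_ne_one {K W M : Type*} [Field K] [AddCommGroup W] [Module K W]
    [Monoid M] {ψ : AddChar K M} (hψ : ψ ≠ 1) {p : Submodule K W} {w : Module.Dual K W}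
    (hw : ¬∀ u ∈ p, w u = 0) : ∃ a ∈ p, ψ (w a) ≠ 1 := by
  push Not at hw
  obtain ⟨u, hu, hwu⟩ := hw
  obtain ⟨t, ht⟩ := AddChar.ne_one_iff.mp hψ
  refine ⟨(t / w u) • u, p.smul_mem _ hu, ?_⟩
  rwa [map_smul, smul_eq_mul, div_mul_cancel₀ _ hwu]

theorem IsInvariantMeasure.map_eq_zero_of_translate_eq_smul {E : C1Space Fq I V}
    {μ : ↥(Dspace E) →ₗ[ℂ] ℂ} (hμ : IsInvariantMeasure E μ) {g : ↥(Dspace E)} {a : V} {c : ℂ}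
    (hc : c ≠ 1) (hg : ∀ v, (g : V → ℂ) (v + a) = c * (g : V → ℂ) v) : μ g = 0 := by
  have key := hμ a g
  rw [show (⟨fun v => (g : V → ℂ) (v + a), translate_mem E g.2 a⟩ : ↥(Dspace E)) = c • g from
    Subtype.ext (funext hg), map_smul, smul_eq_mul] at key
  by_contra hne
  exact hc ((mul_eq_right₀ hne).mp key)

theorem fourierD_eq_zero_of_not_annihilates {E : C1Space Fq I V} {ψ : AddChar Fq ℂ}
    (hψ : ψ ≠ 1) {μ : ↥(Dspace E) →ₗ[ℂ] ℂ} (hμ : IsInvariantMeasure E μ) (f : ↥(Dspace E))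
    {i : I} (hinv : ∀ a ∈ E.F i, ∀ v : V, (f : V → ℂ) (v + a) = (f : V → ℂ) v)
    (w : {w : Module.Dual Fq V // MemDualCheck E w}) (hw : ¬∀ u ∈ E.F i, w.1 u = 0) :
    fourierD E ψ μ f w = 0 := by
  obtain ⟨a, ha, hψa⟩ := exists_mem_addChar_apply_ne_one hψ hw
  refine hμ.map_eq_zero_of_translate_eq_smul (a := a) (c := starRingEnd ℂ (ψ (w.1 a)))
    (fun h => hψa (by simpa using congrArg (starRingEnd ℂ) h)) fun v => ?_
  change (f : V → ℂ) (v + a) * starRingEnd ℂ (ψ (w.1 (v + a)))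
    = starRingEnd ℂ (ψ (w.1 a)) * ((f : V → ℂ) v * starRingEnd ℂ (ψ (w.1 v)))
  rw [hinv a ha v, map_add, AddChar.map_add_eq_mul, map_mul]
  ring

theorem fourierD_add_of_annihilates {E : C1Space Fq I V} (ψ : AddChar Fq ℂ)
    (μ : ↥(Dspace E) →ₗ[ℂ] ℂ) (f : ↥(Dspace E)) {j : I}
    (hz : ∀ v : V, v ∉ E.F j → (f : V → ℂ) v = 0)
    (w : {w : Module.Dual Fq V // MemDualCheck E w}) {b : Module.Dual Fq V}
    (hb : ∀ u ∈ E.F j, b u = 0) (hwb : MemDualCheck E (w.1 + b)) :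
    fourierD E ψ μ f ⟨w.1 + b, hwb⟩ = fourierD E ψ μ f w := by
  refine congrArg μ (Subtype.ext (funext fun v => ?_))
  change (f : V → ℂ) v * starRingEnd ℂ (ψ ((w.1 + b) v))
    = (f : V → ℂ) v * starRingEnd ℂ (ψ (w.1 v))
  by_cases hv : v ∈ E.F j
  · rw [LinearMap.add_apply, hb v hv, add_zero]
  · rw [hz v hv, zero_mul, zero_mul]

theorem statement15_general (Fq : Type) [Field Fq]
    (ψ : AddChar Fq ℂ) (hψ : ψ ≠ 1)
    (I : Type) [PartialOrder I]
    (V : Type) [AddCommGroup V] [Module Fq V] (E : C1Space Fq I V)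
    (μ : ↥(Dspace E) →ₗ[ℂ] ℂ) (hμ : IsInvariantMeasure E μ)
    (f : V → ℂ) (i j : I) (hij : i ≤ j)
    (hz : ∀ v : V, v ∉ E.F j → f v = 0)
    (hinv : ∀ w ∈ E.F i, ∀ v : V, f (v + w) = f v) :
    (∀ w : {w : Module.Dual Fq V // MemDualCheck E w},
       ¬(∀ u ∈ E.F i, w.1 u = 0) →
       fourierD E ψ μ ⟨f, mem_Dspace ⟨i, j, hij, hz, hinv⟩⟩ w = 0) ∧
    (∀ (w : {w : Module.Dual Fq V // MemDualCheck E w}) (b : Module.Dual Fq V)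
       (hb : ∀ u ∈ E.F j, b u = 0),
       fourierD E ψ μ ⟨f, mem_Dspace ⟨i, j, hij, hz, hinv⟩⟩
           ⟨w.1 + b, memDualCheck_add E w.2 ⟨j, hb⟩⟩
         = fourierD E ψ μ ⟨f, mem_Dspace ⟨i, j, hij, hz, hinv⟩⟩ w) :=
  ⟨fun w hw => fourierD_eq_zero_of_not_annihilates hψ hμ _ hinv w hw,
    fun w _ hb => fourierD_add_of_annihilates ψ μ _ hz w hb _⟩

/-- the Fourier transform maps `D(E)` into the Bruhat space of the dual
filtered space: if `f ∈ D(E)` vanishes outside `F(j)` and is `F(i)`-invariant (`i ≤ j`),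
then `F_μ(f)` vanishes at every `w ∈ V̌` not annihilating `F(i)`, and `F_μ(f)` is
invariant under translation by every `b ∈ F(j)^⊥`. -/
theorem statement15 (Fq : Type) [Field Fq] [Fintype Fq]
    (ψ : AddChar Fq ℂ) (hψ : ψ ≠ 1)
    (I : Type) [PartialOrder I]
    (V : Type) [AddCommGroup V] [Module Fq V] (E : C1Space Fq I V)
    (μ : ↥(Dspace E) →ₗ[ℂ] ℂ) (hμ : IsInvariantMeasure E μ)
    (f : V → ℂ) (i j : I) (hij : i ≤ j)
    (hz : ∀ v : V, v ∉ E.F j → f v = 0)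
    (hinv : ∀ w ∈ E.F i, ∀ v : V, f (v + w) = f v) :
    (∀ w : {w : Module.Dual Fq V // MemDualCheck E w},
       ¬(∀ u ∈ E.F i, w.1 u = 0) →
       fourierD E ψ μ ⟨f, mem_Dspace ⟨i, j, hij, hz, hinv⟩⟩ w = 0) ∧
    (∀ (w : {w : Module.Dual Fq V // MemDualCheck E w}) (b : Module.Dual Fq V)
       (hb : ∀ u ∈ E.F j, b u = 0),
       fourierD E ψ μ ⟨f, mem_Dspace ⟨i, j, hij, hz, hinv⟩⟩
           ⟨w.1 + b, memDualCheck_add E w.2 ⟨j, hb⟩⟩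
         = fourierD E ψ μ ⟨f, mem_Dspace ⟨i, j, hij, hz, hinv⟩⟩ w) :=
  statement15_general Fq ψ hψ I V E μ hμ f i j hij hz hinv
end

section
/- Well-definedness of the direct image along an admissible epimorphism: let 0 → E₁ →α E₂ →β E₃ → 0 be an admissible triple of C₁-spaces over F_q, f ∈ D(E₂), and μ₁ an invariant measure on E₁. Then (a) for every w' ∈ V₂ the function V₁ → ℂ, v ↦ f(α(v) + w'), lies in D(E₁); (b) if β(w'₁) = β(w'₂) then μ₁(v ↦ f(α(v) + w'₁)) = μ₁(v ↦ f(α(v) + w'₂)); (c) the resulting function β_*(f ⊗ μ₁) : V₃ → ℂ, defined by β_*(f ⊗ μ₁)(w) = μ₁(v ↦ f(α(v) + w')) for any w' with β(w') = w, lies in D(E₃). -/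
open scoped Classical

variable {Fq : Type} [Field Fq] {I : Type} [PartialOrder I]
  {V : Type} [AddCommGroup V] [Module Fq V]

/-- An admissible triple of `C₁`-spaces `0 → E₁ →α E₂ →β E₃ → 0`: a short exact sequence
of the underlying `Fq`-vector spaces such that the filtration of `E₁` is (cofinally)
induced from that of `E₂`, and the filtration of `E₃` is (cofinally) the image of that
of `E₂`. -/
structure AdmissibleTriple {Fq : Type} [Field Fq]
    {I₁ I₂ I₃ : Type} [PartialOrder I₁] [PartialOrder I₂] [PartialOrder I₃]
    {V₁ V₂ V₃ : Type} [AddCommGroup V₁] [Module Fq V₁] [AddCommGroup V₂] [Module Fq V₂]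
    [AddCommGroup V₃] [Module Fq V₃]
    (E₁ : C1Space Fq I₁ V₁) (E₂ : C1Space Fq I₂ V₂) (E₃ : C1Space Fq I₃ V₃)
    (α : V₁ →ₗ[Fq] V₂) (β : V₂ →ₗ[Fq] V₃) : Prop where
  inj : Function.Injective α
  surj : Function.Surjective β
  exact : LinearMap.range α = LinearMap.ker β
  exists_phi1 : ∃ φ₁ : I₂ → I₁, Monotone φ₁ ∧
    (∀ i : I₂, Submodule.map α (E₁.F (φ₁ i)) = E₂.F i ⊓ LinearMap.range α) ∧
    (∀ j : I₁, ∃ i₁ i₂ : I₂, φ₁ i₁ ≤ j ∧ j ≤ φ₁ i₂)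
  exists_phi3 : ∃ φ₃ : I₂ → I₃, Monotone φ₃ ∧
    (∀ i : I₂, E₃.F (φ₃ i) = Submodule.map β (E₂.F i)) ∧
    (∀ j : I₃, ∃ i₁ i₂ : I₂, φ₃ i₁ ≤ j ∧ j ≤ φ₃ i₂)

/-!
The fibre functions `v ↦ f (α v + w')` are pullbacks along `α` of translates of `f`, so they lie
in `D(E₁)` because the filtration of `E₁` is the one induced by `α`. Two points of one fibre of
`β` differ by an element of `α(V₁)`, so their fibre functions differ by a translation and have the
same invariant measure. Finally, if `f` is supported in `F₂(j)` and `F₂(i)`-invariant, then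
`β_*(f ⊗ μ₁)` is supported in `β(F₂(j)) = F₃(φ₃ j)` and `β(F₂(i)) = F₃(φ₃ i)`-invariant.
-/

section DirectImage

variable {Fq : Type} [Field Fq] {I₁ I₂ I₃ : Type} [PartialOrder I₁] [PartialOrder I₂]
  [PartialOrder I₃] {V₁ V₂ V₃ : Type} [AddCommGroup V₁] [Module Fq V₁] [AddCommGroup V₂]
  [Module Fq V₂] [AddCommGroup V₃] [Module Fq V₃]
  {E₁ : C1Space Fq I₁ V₁} {E₂ : C1Space Fq I₂ V₂} {E₃ : C1Space Fq I₃ V₃}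

theorem Submodule.eq_comap_of_map_eq_inf_range {α : V₁ →ₗ[Fq] V₂} (hα : Function.Injective α)
    {p : Submodule Fq V₁} {q : Submodule Fq V₂} (h : p.map α = q ⊓ LinearMap.range α) :
    p = q.comap α := by
  rw [← Submodule.comap_map_eq_of_injective hα p, h]
  ext v
  simp

theorem AdmissibleTriple.exists_comap {α : V₁ →ₗ[Fq] V₂} {β : V₂ →ₗ[Fq] V₃}
    (adm : AdmissibleTriple E₁ E₂ E₃ α β) :
    ∃ φ₁ : I₂ → I₁, Monotone φ₁ ∧ ∀ i, E₁.F (φ₁ i) = (E₂.F i).comap α := by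
  obtain ⟨φ₁, hmono, hmap, -⟩ := adm.exists_phi1
  exact ⟨φ₁, hmono, fun i => Submodule.eq_comap_of_map_eq_inf_range adm.inj (hmap i)⟩

theorem AdmissibleTriple.map_map_eq_zero {α : V₁ →ₗ[Fq] V₂} {β : V₂ →ₗ[Fq] V₃}
    (adm : AdmissibleTriple E₁ E₂ E₃ α β) (v : V₁) : β (α v) = 0 := by
  rw [← LinearMap.mem_ker, ← adm.exact]
  exact LinearMap.mem_range_self α v

theorem comp_mem_Dspace {α : V₁ →ₗ[Fq] V₂} {φ : I₂ → I₁} (hφ : Monotone φ)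
    (hcomap : ∀ i, E₁.F (φ i) = (E₂.F i).comap α) {g : V₂ → ℂ} (hg : g ∈ Dspace E₂) :
    (fun v => g (α v)) ∈ Dspace E₁ := by
  obtain ⟨i, j, hij, hzero, hinv⟩ := hg
  refine ⟨φ i, φ j, hφ hij, fun v hv => hzero _ ?_, fun w hw v => ?_⟩
  · rwa [hcomap] at hv
  · rw [hcomap] at hw
    simp only [map_add]
    exact hinv _ hw _

theorem IsInvariantMeasure.apply_comp_add_eq {μ : ↥(Dspace E₁) →ₗ[ℂ] ℂ}
    (hμ : IsInvariantMeasure E₁ μ) (α : V₁ →ₗ[Fq] V₂) (f : V₂ → ℂ) {w₁ w₂ : V₂}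
    (hw : w₁ - w₂ ∈ LinearMap.range α) (h₁ : (fun v => f (α v + w₁)) ∈ Dspace E₁)
    (h₂ : (fun v => f (α v + w₂)) ∈ Dspace E₁) :
    μ ⟨fun v => f (α v + w₁), h₁⟩ = μ ⟨fun v => f (α v + w₂), h₂⟩ := by
  obtain ⟨a, ha⟩ := hw
  have htranslate : (⟨fun v => f (α v + w₁), h₁⟩ : ↥(Dspace E₁)) =
      ⟨fun v => f (α (v + a) + w₂), translate_mem E₁ h₂ a⟩ := by
    ext v
    simp only [map_add, ha]
    abel_nf
  rw [htranslate]
  exact hμ a ⟨_, h₂⟩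

theorem mem_Dspace_of_surjective {β : V₂ →ₗ[Fq] V₃} (hβ : Function.Surjective β)
    {φ : I₂ → I₃} (hφ : Monotone φ) (hmap : ∀ i, E₃.F (φ i) = (E₂.F i).map β)
    {h : V₃ → ℂ} {i j : I₂} (hij : i ≤ j)
    (hzero : ∀ w, β w ∉ (E₂.F j).map β → h (β w) = 0)
    (hinv : ∀ u ∈ E₂.F i, ∀ w, h (β (w + u)) = h (β w)) :
    h ∈ Dspace E₃ := by
  refine ⟨φ i, φ j, hφ hij, fun w hw => ?_, fun u hu w => ?_⟩
  · obtain ⟨w, rfl⟩ := hβ w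
    exact hzero w (hmap j ▸ hw)
  · obtain ⟨w, rfl⟩ := hβ w
    rw [hmap] at hu
    obtain ⟨u, hu, rfl⟩ := hu
    rw [← map_add, hinv u hu]

end DirectImage

theorem statement17_general (Fq : Type) [Field Fq]
    (I₁ I₂ I₃ : Type) [PartialOrder I₁] [PartialOrder I₂] [PartialOrder I₃]
    (V₁ V₂ V₃ : Type) [AddCommGroup V₁] [Module Fq V₁] [AddCommGroup V₂] [Module Fq V₂]
    [AddCommGroup V₃] [Module Fq V₃]
    (E₁ : C1Space Fq I₁ V₁) (E₂ : C1Space Fq I₂ V₂) (E₃ : C1Space Fq I₃ V₃)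
    (α : V₁ →ₗ[Fq] V₂) (β : V₂ →ₗ[Fq] V₃)
    (adm : AdmissibleTriple E₁ E₂ E₃ α β)
    (f : V₂ → ℂ) (hf : f ∈ Dspace E₂)
    (μ₁ : ↥(Dspace E₁) →ₗ[ℂ] ℂ) (hμ₁ : IsInvariantMeasure E₁ μ₁) :
    (∀ w' : V₂, (fun v => f (α v + w')) ∈ Dspace E₁) ∧
    (∀ (w₁ w₂ : V₂) (h₁ : (fun v => f (α v + w₁)) ∈ Dspace E₁)
       (h₂ : (fun v => f (α v + w₂)) ∈ Dspace E₁), β w₁ = β w₂ →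
       μ₁ ⟨fun v => f (α v + w₁), h₁⟩ = μ₁ ⟨fun v => f (α v + w₂), h₂⟩) ∧
    (∀ h : V₃ → ℂ,
       (∀ (w' : V₂) (hm : (fun v => f (α v + w')) ∈ Dspace E₁),
          h (β w') = μ₁ ⟨fun v => f (α v + w'), hm⟩) →
       h ∈ Dspace E₃) := by
  obtain ⟨φ₁, hφ₁, hcomap⟩ := adm.exists_comap
  obtain ⟨φ₃, hφ₃, hmap, -⟩ := adm.exists_phi3
  have hfiber : ∀ w', (fun v => f (α v + w')) ∈ Dspace E₁ :=
    fun w' => comp_mem_Dspace hφ₁ hcomap (translate_mem E₂ hf w')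
  refine ⟨hfiber, fun w₁ w₂ h₁ h₂ hβ => hμ₁.apply_comp_add_eq α f ?_ h₁ h₂, fun h hh => ?_⟩
  · rw [adm.exact, LinearMap.mem_ker, map_sub, hβ, sub_self]
  obtain ⟨i, j, hij, hzero, hinv⟩ := hf
  refine mem_Dspace_of_surjective adm.surj hφ₃ hmap hij (fun w hw => ?_) (fun u hu w => ?_)
  · have hfiber_zero : (⟨fun v => f (α v + w), hfiber w⟩ : ↥(Dspace E₁)) = 0 := by
      ext v
      refine hzero _ fun hmem => hw ⟨_, hmem, ?_⟩
      rw [map_add, adm.map_map_eq_zero, zero_add]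
    rw [hh w (hfiber w), hfiber_zero, map_zero]
  · rw [hh _ (hfiber _), hh w (hfiber w)]
    congr 1
    ext v
    change f (α v + (w + u)) = f (α v + w)
    rw [← add_assoc]
    exact hinv u hu _

/-- well-definedness of the direct image along an admissible epimorphism:
for an admissible triple `0 → E₁ →α E₂ →β E₃ → 0`, `f ∈ D(E₂)` and an invariant measure
`μ₁` on `E₁`:
(a) for every `w' ∈ V₂` the function `v ↦ f(α v + w')` lies in `D(E₁)`;
(b) if `β w'₁ = β w'₂` then `μ₁(v ↦ f(α v + w'₁)) = μ₁(v ↦ f(α v + w'₂))`;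
(c) the resulting function `β_*(f ⊗ μ₁) : V₃ → ℂ`, sending `β w'` to
`μ₁(v ↦ f(α v + w'))`, lies in `D(E₃)`. -/
theorem statement17 (Fq : Type) [Field Fq] [Fintype Fq]
    (I₁ I₂ I₃ : Type) [PartialOrder I₁] [PartialOrder I₂] [PartialOrder I₃]
    (V₁ V₂ V₃ : Type) [AddCommGroup V₁] [Module Fq V₁] [AddCommGroup V₂] [Module Fq V₂]
    [AddCommGroup V₃] [Module Fq V₃]
    (E₁ : C1Space Fq I₁ V₁) (E₂ : C1Space Fq I₂ V₂) (E₃ : C1Space Fq I₃ V₃)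
    (α : V₁ →ₗ[Fq] V₂) (β : V₂ →ₗ[Fq] V₃)
    (adm : AdmissibleTriple E₁ E₂ E₃ α β)
    (f : V₂ → ℂ) (hf : f ∈ Dspace E₂)
    (μ₁ : ↥(Dspace E₁) →ₗ[ℂ] ℂ) (hμ₁ : IsInvariantMeasure E₁ μ₁) :
    (∀ w' : V₂, (fun v => f (α v + w')) ∈ Dspace E₁) ∧
    (∀ (w₁ w₂ : V₂) (h₁ : (fun v => f (α v + w₁)) ∈ Dspace E₁)
       (h₂ : (fun v => f (α v + w₂)) ∈ Dspace E₁), β w₁ = β w₂ →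
       μ₁ ⟨fun v => f (α v + w₁), h₁⟩ = μ₁ ⟨fun v => f (α v + w₂), h₂⟩) ∧
    (∀ h : V₃ → ℂ,
       (∀ (w' : V₂) (hm : (fun v => f (α v + w')) ∈ Dspace E₁),
          h (β w') = μ₁ ⟨fun v => f (α v + w'), hm⟩) →
       h ∈ Dspace E₃) :=
  statement17_general Fq I₁ I₂ I₃ V₁ V₂ V₃ E₁ E₂ E₃ α β adm f hf μ₁ hμ₁
end

section
/- Fubini formula: let 0 → E₁ →α E₂ →β E₃ → 0 be an admissible triple of C₁-spaces over F_q, and let μ₁, μ₂, μ₃ be invariant measures on E₁, E₂, E₃ respectively such that μ₂(δ_{F₂(j)}) = μ₁(δ_{α⁻¹(F₂(j))})·μ₃(δ_{β(F₂(j))}) for every j ∈ I₂. Then for every f ∈ D(E₂): μ₃(β_*(f ⊗ μ₁)) = μ₂(f), where β_*(f ⊗ μ₁) ∈ D(E₃) is defined by β_*(f ⊗ μ₁)(w) = μ₁(v ↦ f(α(v) + w')) for any w' ∈ V₂ with β(w') = w. -/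
/-!
A function `f ∈ D(E₂)` that is `F₂(i)`-invariant and supported on `F₂(j)` is a finite linear
combination of indicators of cosets `a + F₂(i)`, because `F₂(j)/F₂(i)` is finite. Both sides
of the formula are linear in `f`, so it suffices to treat one coset indicator. Translation
invariance gives it `μ₂`-measure `μ₂(δ_{F₂(i)})`. Its fibre integral along `α` is
`μ₁(δ_{α⁻¹F₂(i)})` times the indicator of `β a + β(F₂(i))`, whose `μ₃`-measure is
`μ₃(δ_{β(F₂(i))})`; the compatibility hypothesis says exactly that the two agree.
-/

open scoped Classical

variable {Fq : Type} [Field Fq] {I : Type} [PartialOrder I]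
  {V : Type} [AddCommGroup V] [Module Fq V]

section AdmissibleLemmas

variable {I₁ I₂ I₃ : Type} [PartialOrder I₁] [PartialOrder I₂] [PartialOrder I₃]
  {V₁ V₂ V₃ : Type} [AddCommGroup V₁] [Module Fq V₁] [AddCommGroup V₂] [Module Fq V₂]
  [AddCommGroup V₃] [Module Fq V₃]

/-- In an admissible triple, the indicator function of `α⁻¹(F₂(j))` lies in `D(E₁)`. -/
theorem comap_indicator_mem {E₁ : C1Space Fq I₁ V₁} {E₂ : C1Space Fq I₂ V₂}
    {E₃ : C1Space Fq I₃ V₃} {α : V₁ →ₗ[Fq] V₂} {β : V₂ →ₗ[Fq] V₃}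
    (adm : AdmissibleTriple E₁ E₂ E₃ α β) (j : I₂) :
    (fun v => if v ∈ Submodule.comap α (E₂.F j) then (1 : ℂ) else 0) ∈ Dspace E₁ := by
  obtain ⟨φ₁, -, heq, -⟩ := adm.exists_phi1
  have hco : Submodule.comap α (E₂.F j) = E₁.F (φ₁ j) := by
    ext v
    simp only [Submodule.mem_comap]
    constructor
    · intro hv
      have h1 : α v ∈ E₂.F j ⊓ LinearMap.range α := ⟨hv, ⟨v, rfl⟩⟩
      rw [← heq j] at h1
      obtain ⟨u, hu, huv⟩ := h1
      rwa [← adm.inj huv]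
    · intro hv
      have h2 : α v ∈ Submodule.map α (E₁.F (φ₁ j)) := ⟨v, hv, rfl⟩
      rw [heq j] at h2
      exact h2.1
  rw [hco]
  exact indicator_mem E₁ (φ₁ j)

/-- In an admissible triple, the indicator function of `β(F₂(j))` lies in `D(E₃)`. -/
theorem map_indicator_mem {E₁ : C1Space Fq I₁ V₁} {E₂ : C1Space Fq I₂ V₂}
    {E₃ : C1Space Fq I₃ V₃} {α : V₁ →ₗ[Fq] V₂} {β : V₂ →ₗ[Fq] V₃}
    (adm : AdmissibleTriple E₁ E₂ E₃ α β) (j : I₂) :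
    (fun v => if v ∈ Submodule.map β (E₂.F j) then (1 : ℂ) else 0) ∈ Dspace E₃ := by
  obtain ⟨φ₃, -, heq, -⟩ := adm.exists_phi3
  rw [← heq j]
  exact indicator_mem E₃ (φ₃ j)

end AdmissibleLemmas

theorem exists_finset_sum_coset_indicator {R W M : Type*} [Ring R] [AddCommGroup W]
    [Module R W] [Semiring M] {P Q : Submodule R W} [Finite (Q ⧸ P.comap Q.subtype)]
    (hPQ : P ≤ Q) {f : W → M} (hsupp : ∀ v, v ∉ Q → f v = 0)
    (hinv : ∀ w ∈ P, ∀ v, f (v + w) = f v) :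
    ∃ s : Finset W, f = ∑ a ∈ s, f a • fun v => if v - a ∈ P then (1 : M) else 0 := by
  have := Fintype.ofFinite (Q ⧸ P.comap Q.subtype)
  set rep : Q ⧸ P.comap Q.subtype → W := fun c => (c.out : W)
  have hrep_inj : Function.Injective rep := fun c c' hcc' => by
    rw [← Submodule.Quotient.mk_out c, ← Submodule.Quotient.mk_out c', Subtype.ext hcc']
  have hcoset : ∀ v (hv : v ∈ Q) c,
      v - rep c ∈ P ↔ c = Submodule.Quotient.mk ⟨v, hv⟩ := fun v hv c => by
    conv_rhs => rw [← Submodule.Quotient.mk_out c, eq_comm, Submodule.Quotient.eq]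
    rfl
  refine ⟨Finset.univ.image rep, funext fun v => ?_⟩
  rw [Finset.sum_image fun c _ c' _ h => hrep_inj h, Finset.sum_apply]
  simp only [Pi.smul_apply, smul_eq_mul, mul_ite, mul_one, mul_zero]
  by_cases hv : v ∈ Q
  · rw [Finset.sum_eq_single_of_mem (Submodule.Quotient.mk ⟨v, hv⟩) (Finset.mem_univ _)]
    · have hmem := (hcoset v hv _).2 rfl
      rw [if_pos hmem]
      simpa using hinv _ hmem (rep (Submodule.Quotient.mk ⟨v, hv⟩))
    · exact fun c _ hc => if_neg fun h => hc ((hcoset v hv c).1 h)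
  · refine (hsupp v hv).trans (Finset.sum_eq_zero fun c _ => if_neg fun h => hv ?_).symm
    simpa [rep] using Q.add_mem (c.out).2 (hPQ h)

theorem Submodule.linearMap_mk_sum_smul {ι R M : Type*} [CommSemiring R] [AddCommMonoid M]
    [Module R M] {p : Submodule R M} (μ : p →ₗ[R] R) (s : Finset ι) (c : ι → R) {g : ι → M}
    (hg : ∀ a, g a ∈ p) {x : M} (hx : x ∈ p) (hxg : x = ∑ a ∈ s, c a • g a) :
    μ ⟨x, hx⟩ = ∑ a ∈ s, c a * μ ⟨g a, hg a⟩ := by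
  have : (⟨x, hx⟩ : p) = ∑ a ∈ s, c a • ⟨g a, hg a⟩ := by
    ext1
    simp [hxg]
  rw [this, map_sum]
  simp only [map_smul, smul_eq_mul]

section InvariantMeasure

variable {E : C1Space Fq I V} {P : Submodule Fq V}

theorem coset_indicator_mem (hP : (fun v => if v ∈ P then (1 : ℂ) else 0) ∈ Dspace E) (a : V) :
    (fun v => if v - a ∈ P then (1 : ℂ) else 0) ∈ Dspace E := by
  simpa only [sub_eq_add_neg] using translate_mem E hP (-a)

theorem IsInvariantMeasure.apply_coset_indicator {μ : Dspace E →ₗ[ℂ] ℂ}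
    (hμ : IsInvariantMeasure E μ) (hP : (fun v => if v ∈ P then (1 : ℂ) else 0) ∈ Dspace E)
    (a : V) : μ ⟨_, coset_indicator_mem hP a⟩ = μ ⟨_, hP⟩ := by
  convert hμ (-a) ⟨_, hP⟩ using 3
  simp only [sub_eq_add_neg]

end InvariantMeasure

section ShortExactSequence

variable {I₁ V₁ V₂ V₃ : Type} [PartialOrder I₁] [AddCommGroup V₁] [Module Fq V₁]
  [AddCommGroup V₂] [Module Fq V₂] [AddCommGroup V₃] [Module Fq V₃]
  {α : V₁ →ₗ[Fq] V₂} {β : V₂ →ₗ[Fq] V₃} {P : Submodule Fq V₂} {a w : V₂}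

theorem fiber_coset_indicator_eq_coset_indicator (hker : LinearMap.ker β ≤ LinearMap.range α)
    (h : β w - β a ∈ P.map β) : ∃ v₀ : V₁,
      (fun v => if α v + w - a ∈ P then (1 : ℂ) else 0) =
        fun v => if v - v₀ ∈ P.comap α then 1 else 0 := by
  obtain ⟨u, hu, hβu⟩ := h
  obtain ⟨v₁, hv₁⟩ := hker (show w - a - u ∈ LinearMap.ker β by simp [hβu])
  refine ⟨-v₁, funext fun v => if_congr ?_ rfl rfl⟩
  rw [Submodule.mem_comap, sub_neg_eq_add, map_add, hv₁,
    show α v + (w - a - u) = α v + w - a - u by abel, P.sub_mem_iff_left hu]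

theorem fiber_coset_indicator_eq_zero (hrange : LinearMap.range α ≤ LinearMap.ker β)
    (h : β w - β a ∉ P.map β) :
    (fun v => if α v + w - a ∈ P then (1 : ℂ) else 0) = 0 :=
  funext fun v => if_neg fun hv => h ⟨_, hv, by
    simp [LinearMap.mem_ker.1 (hrange (LinearMap.mem_range_self α v))]⟩

theorem IsInvariantMeasure.fiber_coset_indicator {E₁ : C1Space Fq I₁ V₁}
    {μ₁ : Dspace E₁ →ₗ[ℂ] ℂ} (hμ₁ : IsInvariantMeasure E₁ μ₁)
    (hexact : LinearMap.range α = LinearMap.ker β)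
    (hP : (fun v => if v ∈ P.comap α then (1 : ℂ) else 0) ∈ Dspace E₁) (a w : V₂) :
    ∃ hm : (fun v => if α v + w - a ∈ P then (1 : ℂ) else 0) ∈ Dspace E₁,
      μ₁ ⟨_, hm⟩ = μ₁ ⟨_, hP⟩ * if β w - β a ∈ P.map β then 1 else 0 := by
  by_cases h : β w - β a ∈ P.map β
  · obtain ⟨v₀, heq⟩ := fiber_coset_indicator_eq_coset_indicator hexact.ge h
    refine ⟨heq ▸ coset_indicator_mem hP v₀, ?_⟩
    rw [if_pos h, mul_one, ← hμ₁.apply_coset_indicator hP v₀]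
    exact congrArg μ₁ (Subtype.ext heq)
  · have heq := fiber_coset_indicator_eq_zero hexact.le h
    refine ⟨heq ▸ zero_mem _, ?_⟩
    rw [if_neg h, mul_zero]
    exact (congrArg μ₁ (Subtype.ext heq)).trans (map_zero μ₁)

theorem IsInvariantMeasure.fiber_sum_coset_indicator {E₁ : C1Space Fq I₁ V₁}
    {μ₁ : Dspace E₁ →ₗ[ℂ] ℂ} (hμ₁ : IsInvariantMeasure E₁ μ₁)
    (hexact : LinearMap.range α = LinearMap.ker β)
    (hP : (fun v => if v ∈ P.comap α then (1 : ℂ) else 0) ∈ Dspace E₁) {s : Finset V₂}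
    {c : V₂ → ℂ} {f : V₂ → ℂ} (hf : f = ∑ a ∈ s, c a • fun v => if v - a ∈ P then (1 : ℂ) else 0)
    (w : V₂) : ∃ hm : (fun v => f (α v + w)) ∈ Dspace E₁,
      μ₁ ⟨_, hm⟩ = ∑ a ∈ s, c a * μ₁ ⟨_, hP⟩ * if β w - β a ∈ P.map β then 1 else 0 := by
  have hfiber := hμ₁.fiber_coset_indicator hexact hP
  have hfw : (fun v => f (α v + w)) =
      ∑ a ∈ s, c a • fun v => if α v + w - a ∈ P then (1 : ℂ) else 0 := by
    ext v
    simp only [hf, Finset.sum_apply, Pi.smul_apply]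
  have hm : (fun v => f (α v + w)) ∈ Dspace E₁ := by
    rw [hfw]
    exact sum_mem fun a _ => Submodule.smul_mem _ _ (hfiber a w).1
  refine ⟨hm, ?_⟩
  rw [Submodule.linearMap_mk_sum_smul μ₁ s c (fun a => (hfiber a w).1) hm hfw]
  simp only [(hfiber _ w).2, mul_assoc]

end ShortExactSequence

/-- Fubini formula: for an admissible triple `0 → E₁ →α E₂ →β E₃ → 0` of
`C₁`-spaces over a finite field and invariant measures `μ₁, μ₂, μ₃` on `E₁, E₂, E₃` with
`μ₂(δ_{F₂(j)}) = μ₁(δ_{α⁻¹(F₂(j))}) · μ₃(δ_{β(F₂(j))})` for every `j ∈ I₂`, one has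
`μ₃(β_*(f ⊗ μ₁)) = μ₂(f)` for every `f ∈ D(E₂)`, where `β_*(f ⊗ μ₁) ∈ D(E₃)` is the
function sending `β w'` to `μ₁(v ↦ f(α v + w'))`. -/
theorem statement18 (Fq : Type) [Field Fq] [Fintype Fq]
    (I₁ I₂ I₃ : Type) [PartialOrder I₁] [PartialOrder I₂] [PartialOrder I₃]
    (V₁ V₂ V₃ : Type) [AddCommGroup V₁] [Module Fq V₁] [AddCommGroup V₂] [Module Fq V₂]
    [AddCommGroup V₃] [Module Fq V₃]
    (E₁ : C1Space Fq I₁ V₁) (E₂ : C1Space Fq I₂ V₂) (E₃ : C1Space Fq I₃ V₃)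
    (α : V₁ →ₗ[Fq] V₂) (β : V₂ →ₗ[Fq] V₃)
    (adm : AdmissibleTriple E₁ E₂ E₃ α β)
    (μ₁ : ↥(Dspace E₁) →ₗ[ℂ] ℂ) (hμ₁ : IsInvariantMeasure E₁ μ₁)
    (μ₂ : ↥(Dspace E₂) →ₗ[ℂ] ℂ) (hμ₂ : IsInvariantMeasure E₂ μ₂)
    (μ₃ : ↥(Dspace E₃) →ₗ[ℂ] ℂ) (hμ₃ : IsInvariantMeasure E₃ μ₃)
    (hcompat : ∀ j : I₂,
      μ₂ ⟨fun v => if v ∈ E₂.F j then (1 : ℂ) else 0, indicator_mem E₂ j⟩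
        = μ₁ ⟨fun v => if v ∈ Submodule.comap α (E₂.F j) then (1 : ℂ) else 0,
              comap_indicator_mem adm j⟩
          * μ₃ ⟨fun v => if v ∈ Submodule.map β (E₂.F j) then (1 : ℂ) else 0,
              map_indicator_mem adm j⟩)
    (f : V₂ → ℂ) (hf : f ∈ Dspace E₂) :
    ∀ (h : V₃ → ℂ) (hmem : h ∈ Dspace E₃),
      (∀ (w' : V₂) (hm : (fun v => f (α v + w')) ∈ Dspace E₁),
         h (β w') = μ₁ ⟨fun v => f (α v + w'), hm⟩) →
      μ₃ ⟨h, hmem⟩ = μ₂ ⟨f, hf⟩ := by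
  intro h hmem hh
  obtain ⟨i, j, hij, hsupp, hinv⟩ := id hf
  have := E₂.finite_quot i j hij
  have : Finite (E₂.F j ⧸ (E₂.F i).comap (E₂.F j).subtype) := Module.finite_of_finite Fq
  obtain ⟨s, hs⟩ := exists_finset_sum_coset_indicator (E₂.mono hij) hsupp hinv
  have hpush : h = ∑ a ∈ s, (f a * μ₁ ⟨_, comap_indicator_mem adm i⟩) •
      fun w => if w - β a ∈ (E₂.F i).map β then (1 : ℂ) else 0 := by
    ext w
    obtain ⟨w, rfl⟩ := adm.surj w
    obtain ⟨hm, hfiber⟩ :=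
      hμ₁.fiber_sum_coset_indicator adm.exact (comap_indicator_mem adm i) hs w
    simp only [hh w hm, hfiber, Finset.sum_apply, Pi.smul_apply, smul_eq_mul, mul_assoc]
  rw [Submodule.linearMap_mk_sum_smul μ₃ s _
      (fun a => coset_indicator_mem (map_indicator_mem adm i) (β a)) hmem hpush,
    Submodule.linearMap_mk_sum_smul μ₂ s f
      (fun a => coset_indicator_mem (indicator_mem E₂ i) a) hf hs]
  refine Finset.sum_congr rfl fun a _ => ?_
  rw [hμ₃.apply_coset_indicator (map_indicator_mem adm i),
    hμ₂.apply_coset_indicator (indicator_mem E₂ i), hcompat i, mul_assoc]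
end
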